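/- The language L = {a^n b^m : m ≤ n} is recognised by a nondeterministic 1-VASS with reachability acceptance, but is not recognised by any history-deterministic VASS with reachability acceptance in any dimension (even allowing ε-transitions). -/

import Mathlib

open scoped Classical

/-- A `k`-dimensional vector addition system with states over alphabet `A`.
States are `Fin n`; transitions are labelled by a letter and an effect in `ℤ^k`. -/
structure VASS (k : ℕ) (A : Type) where
  n : ℕ
  trans : Set (Fin n × A × (Fin k → ℤ) × Fin n)
  init : Fin n
  acc : Set (Fin n)

namespace VASS

variable {k : ℕ} {A : Type}

/-- A configuration: a state together with counters in `ℕ^k`. -/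
abbrev Conf (V : VASS k A) := Fin V.n × (Fin k → ℕ)

/-- `Run V c w c'`: there is a valid run of `V` from configuration `c` to `c'`
reading the word `w`, with counters staying nonnegative throughout. -/
inductive Run (V : VASS k A) : V.Conf → List A → V.Conf → Prop
  | nil (c : V.Conf) : Run V c [] c
  | cons {q : Fin V.n} {v : Fin k → ℕ} {a : A} {d : Fin k → ℤ} {q' : Fin V.n}
      {w : List A} {c' : V.Conf} :
      (q, a, d, q') ∈ V.trans →
      (∀ i, 0 ≤ (v i : ℤ) + d i) →
      Run V (q', fun i => ((v i : ℤ) + d i).toNat) w c' →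
      Run V (q, v) (a :: w) c'

/-- The initial configuration: initial state with all counters zero. -/
def initConf (V : VASS k A) : V.Conf := (V.init, fun _ => 0)

/-- Coverability acceptance: some run ends in an accepting state. -/
def LangCover (V : VASS k A) : Set (List A) :=
  {w | ∃ c, V.Run V.initConf w c ∧ c.1 ∈ V.acc}

/-- Reachability acceptance: some run ends in an accepting state with all counters zero. -/
def LangReach (V : VASS k A) : Set (List A) :=
  {w | ∃ c, V.Run V.initConf w c ∧ c.1 ∈ V.acc ∧ c.2 = fun _ => 0}

/-- Deterministic: at most one outgoing transition per state and letter. -/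
def Det (V : VASS k A) : Prop :=
  ∀ q a d₁ q₁ d₂ q₂, (q, a, d₁, q₁) ∈ V.trans → (q, a, d₂, q₂) ∈ V.trans →
    d₁ = d₂ ∧ q₁ = q₂

/-- A resolver: given the history (the word read so far) and the next letter,
choose the effect and target state of the transition to take. -/
def Resolver (V : VASS k A) := List A → A → (Fin k → ℤ) × Fin V.n

/-- One step of the run built by a resolver (carrying the prefix read so far). -/
noncomputable def resStep (V : VASS k A) (r : V.Resolver) :
    (List A × Option V.Conf) → A → (List A × Option V.Conf) :=
  fun p a =>
    (p.1 ++ [a],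
      p.2.bind fun c =>
        let t := r p.1 a
        if (c.1, a, t.1, t.2) ∈ V.trans ∧ ∀ i, 0 ≤ ((c.2 i : ℤ) + t.1 i) then
          some (t.2, fun i => ((c.2 i : ℤ) + t.1 i).toNat)
        else none)

/-- The configuration reached by following the resolver on `w` (if the run survives). -/
noncomputable def resRun (V : VASS k A) (r : V.Resolver) (w : List A) : Option V.Conf :=
  (w.foldl (V.resStep r) ([], some V.initConf)).2

/-- History-determinism for coverability acceptance:
some resolver's run accepts every word of the language. -/
def HDCover (V : VASS k A) : Prop :=
  ∃ r : V.Resolver, ∀ w ∈ V.LangCover,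
    ∃ c, V.resRun r w = some c ∧ c.1 ∈ V.acc

/-- History-determinism for reachability acceptance. -/
def HDReach (V : VASS k A) : Prop :=
  ∃ r : V.Resolver, ∀ w ∈ V.LangReach,
    ∃ c, V.resRun r w = some c ∧ c.1 ∈ V.acc ∧ c.2 = fun _ => 0

/-- Coverability language of a VASS with ε-transitions (letter `none` is silent):
the input word is the sequence of actual letters read. -/
def LangCoverE (V : VASS k (Option A)) : Set (List A) :=
  {w | ∃ u c, V.Run V.initConf u c ∧ u.reduceOption = w ∧ c.1 ∈ V.acc}

/-- Reachability language of a VASS with ε-transitions. -/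
def LangReachE (V : VASS k (Option A)) : Set (List A) :=
  {w | ∃ u c, V.Run V.initConf u c ∧ u.reduceOption = w ∧ c.1 ∈ V.acc ∧ c.2 = fun _ => 0}

/-- History-determinism with ε-transitions, coverability: a resolver together with a
(prefix-monotone) scheduling of silent moves accepts every word of the language. -/
def HDCoverE (V : VASS k (Option A)) : Prop :=
  ∃ (r : V.Resolver) (f : List A → List (Option A)),
    (∀ u w, u <+: w → f u <+: f w) ∧
    ∀ w ∈ V.LangCoverE, (f w).reduceOption = w ∧
      ∃ c, V.resRun r (f w) = some c ∧ c.1 ∈ V.acc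

/-- History-determinism with ε-transitions, reachability. -/
def HDReachE (V : VASS k (Option A)) : Prop :=
  ∃ (r : V.Resolver) (f : List A → List (Option A)),
    (∀ u w, u <+: w → f u <+: f w) ∧
    ∀ w ∈ V.LangReachE, (f w).reduceOption = w ∧
      ∃ c, V.resRun r (f w) = some c ∧ c.1 ∈ V.acc ∧ c.2 = fun _ => 0

end VASS

inductive AB | a | b
deriving DecidableEq

open AB List

/-- The language `a^n b^{≤ n}`. -/
def L6 : Set (List AB) :=
  {w | ∃ n m, m ≤ n ∧ w = replicate n a ++ replicate m b}


namespace VASS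

variable {k : ℕ} {A : Type} {V : VASS k A}

theorem run_append {c c' c'' : V.Conf} {w u : List A}
    (h1 : V.Run c w c') (h2 : V.Run c' u c'') : V.Run c (w ++ u) c'' := by
  induction h1 with
  | nil => exact h2
  | cons ht hnn _ ih => exact Run.cons ht hnn (ih h2)

theorem foldl_resStep_fst (r : V.Resolver) :
    ∀ (u : List A) (p : List A) (o : Option V.Conf),
      (u.foldl (V.resStep r) (p, o)).1 = p ++ u := by
  intro u
  induction u with
  | nil => intro p o; simp
  | cons x u ih =>
    intro p o
    simp only [List.foldl_cons]
    rw [show V.resStep r (p, o) x = (p ++ [x], (V.resStep r (p, o) x).2) from rfl]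
    rw [ih]; simp

theorem foldl_resStep_none (r : V.Resolver) :
    ∀ (u : List A) (p : List A),
      (u.foldl (V.resStep r) (p, none)).2 = none := by
  intro u
  induction u with
  | nil => intro p; rfl
  | cons x u ih =>
    intro p
    simp only [List.foldl_cons]
    exact ih (p ++ [x])

theorem foldl_resStep_run (r : V.Resolver) :
    ∀ (u : List A) (p : List A) (c c' : V.Conf),
      (u.foldl (V.resStep r) (p, some c)).2 = some c' → V.Run c u c' := by
  intro u
  induction u with
  | nil =>
    intro p c c' h
    simp only [List.foldl_nil] at h
    cases h; exact Run.nil c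
  | cons x u ih =>
    intro p c c' h
    simp only [List.foldl_cons] at h
    by_cases hc : (c.1, x, (r p x).1, (r p x).2) ∈ V.trans ∧
        ∀ i, 0 ≤ ((c.2 i : ℤ) + (r p x).1 i)
    · have hstep : V.resStep r (p, some c) x =
        (p ++ [x], some ((r p x).2, fun i => ((c.2 i : ℤ) + (r p x).1 i).toNat)) := by
        simp only [resStep, Option.bind_some]
        rw [if_pos hc]
      rw [hstep] at h
      exact Run.cons (q := c.1) (v := c.2) hc.1 hc.2 (ih _ _ _ h)
    · have hstep : V.resStep r (p, some c) x = (p ++ [x], none) := by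
        simp only [resStep, Option.bind_some]
        rw [if_neg hc]
      rw [hstep] at h
      rw [foldl_resStep_none] at h
      exact absurd h (by simp)

theorem resRun_run (r : V.Resolver) {w : List A} {c : V.Conf}
    (h : V.resRun r w = some c) : V.Run V.initConf w c :=
  foldl_resStep_run r w [] _ _ h

theorem resRun_append_some (r : V.Resolver) {w u : List A} {c' : V.Conf}
    (h : V.resRun r (w ++ u) = some c') :
    ∃ c, V.resRun r w = some c ∧ V.Run c u c' := by
  unfold resRun at h ⊢
  rw [List.foldl_append] at h
  set p := w.foldl (V.resStep r) ([], some V.initConf) with hp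
  have hp1 : p.1 = w := by rw [hp, foldl_resStep_fst]; simp
  cases ho : p.2 with
  | none =>
    have : p = (p.1, (none : Option V.Conf)) := by rw [← ho]
    rw [this, foldl_resStep_none] at h
    exact absurd h (by simp)
  | some c =>
    refine ⟨c, rfl, ?_⟩
    have : p = (p.1, some c) := by rw [← ho]
    rw [this] at h
    exact foldl_resStep_run r u p.1 c c' h

end VASS

theorem not_mem_L6 {n m : ℕ} (h : n < m) :
    (replicate n a ++ replicate m b) ∉ L6 := by
  rintro ⟨N, M, hMN, heq⟩
  have ha : (replicate n a ++ replicate m b).count a =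
      (replicate N a ++ replicate M b).count a := by rw [heq]
  have hb : (replicate n a ++ replicate m b).count b =
      (replicate N a ++ replicate M b).count b := by rw [heq]
  simp [List.count_append, List.count_replicate] at ha hb
  omega


/-- The nondeterministic 1-VASS recognising `a^n b^{≤ n}`. -/
def V1 : VASS 1 AB where
  n := 2
  trans := {((0:Fin 2), AB.a, (fun _ => (1:ℤ)), (0:Fin 2)),
            ((0:Fin 2), AB.a, (fun _ => (0:ℤ)), (0:Fin 2)),
            ((0:Fin 2), AB.b, (fun _ => (-1:ℤ)), (1:Fin 2)),
            ((1:Fin 2), AB.b, (fun _ => (-1:ℤ)), (1:Fin 2))}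
  init := 0
  acc := Set.univ

lemma t1 : ((0:Fin 2), AB.a, (fun _ => (1:ℤ)), (0:Fin 2)) ∈ V1.trans := by
  exact Set.mem_insert _ _
lemma t2 : ((0:Fin 2), AB.a, (fun _ => (0:ℤ)), (0:Fin 2)) ∈ V1.trans := by
  exact Set.mem_insert_of_mem _ (Set.mem_insert _ _)
lemma t3 : ((0:Fin 2), AB.b, (fun _ => (-1:ℤ)), (1:Fin 2)) ∈ V1.trans := by
  exact Set.mem_insert_of_mem _ (Set.mem_insert_of_mem _ (Set.mem_insert _ _))
lemma t4 : ((1:Fin 2), AB.b, (fun _ => (-1:ℤ)), (1:Fin 2)) ∈ V1.trans := by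
  exact Set.mem_insert_of_mem _ (Set.mem_insert_of_mem _ (Set.mem_insert_of_mem _ (Set.mem_singleton _)))

lemma runA1 (j c : ℕ) :
    V1.Run ((0:Fin 2), fun _ => c) (replicate j a) ((0:Fin 2), fun _ => c + j) := by
  induction j generalizing c with
  | zero => simpa using VASS.Run.nil (V := V1) ((0:Fin 2), fun _ : Fin 1 => c)
  | succ j ih =>
    rw [replicate_succ]
    refine VASS.Run.cons (d := fun _ => (1:ℤ)) t1 (fun i => by show (0:ℤ) ≤ (c:ℤ) + 1; omega) ?_
    have h : (fun i : Fin 1 => (((fun _ => c : Fin 1 → ℕ) i : ℤ) + (fun _ => (1:ℤ)) i).toNat)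
        = fun _ : Fin 1 => c + 1 := funext fun i => by simp
    rw [h]
    have e : c + (j + 1) = (c + 1) + j := by omega
    rw [e]
    exact ih (c + 1)

lemma runA0 (j c : ℕ) :
    V1.Run ((0:Fin 2), fun _ => c) (replicate j a) ((0:Fin 2), fun _ => c) := by
  induction j with
  | zero => exact VASS.Run.nil _
  | succ j ih =>
    rw [replicate_succ]
    refine VASS.Run.cons (d := fun _ => (0:ℤ)) t2 (fun i => by simp) ?_
    have h : (fun i : Fin 1 => (((fun _ => c : Fin 1 → ℕ) i : ℤ) + (fun _ => (0:ℤ)) i).toNat)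
        = fun _ : Fin 1 => c := funext fun i => by simp
    rw [h]
    exact ih

lemma runB1 (j : ℕ) :
    V1.Run ((1:Fin 2), fun _ => j) (replicate j b) ((1:Fin 2), fun _ => 0) := by
  induction j with
  | zero => exact VASS.Run.nil _
  | succ j ih =>
    rw [replicate_succ]
    refine VASS.Run.cons (d := fun _ => (-1:ℤ)) t4 (fun i => by simp) ?_
    have h : (fun i : Fin 1 => (((fun _ => j + 1 : Fin 1 → ℕ) i : ℤ) + (fun _ => (-1:ℤ)) i).toNat)
        = fun _ : Fin 1 => j := funext fun i => by simp
    rw [h]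
    exact ih

lemma reachB : ∀ (w : List AB) (c0 : ℕ) (c' : V1.Conf),
    V1.Run ((1:Fin 2), fun _ => c0) w c' → c'.2 = (fun _ => 0) → w = replicate c0 b := by
  intro w
  induction w with
  | nil =>
    intro c0 c' h hz
    cases h
    have : c0 = 0 := by simpa using congrFun hz 0
    simp [this]
  | cons x w ih =>
    intro c0 c' h hz
    cases h with
    | cons ht hnn hrest =>
      unfold V1 at ht
      simp only [Set.mem_insert_iff, Set.mem_singleton_iff, Prod.mk.injEq, Prod.ext_iff] at ht
      rcases ht with ⟨h0, _⟩ | ⟨h0, _⟩ | ⟨h0, _⟩ | ⟨-, hx, hd, hq⟩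
      · exact absurd h0 (by decide)
      · exact absurd h0 (by decide)
      · exact absurd h0 (by decide)
      · subst hx; subst hd; subst hq
        have hge : 1 ≤ c0 := by have := hnn 0; simp at this; omega
        have hcnt : (fun i : Fin 1 => (((fun _ => c0 : Fin 1 → ℕ) i : ℤ) + (fun _ => (-1:ℤ)) i).toNat)
            = fun _ : Fin 1 => c0 - 1 := funext fun i => by simp; omega
        rw [hcnt] at hrest
        have hw := ih (c0 - 1) _ hrest hz
        rw [hw, ← replicate_succ]
        congr 1
        omega

lemma reachA : ∀ (w : List AB) (c0 : ℕ) (c' : V1.Conf),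
    V1.Run ((0:Fin 2), fun _ => c0) w c' → c'.2 = (fun _ => 0) →
    ∃ n m, m ≤ n + c0 ∧ w = replicate n a ++ replicate m b := by
  intro w
  induction w with
  | nil =>
    intro c0 c' h hz
    cases h
    exact ⟨0, 0, by omega, by simp⟩
  | cons x w ih =>
    intro c0 c' h hz
    cases h with
    | cons ht hnn hrest =>
      unfold V1 at ht
      simp only [Set.mem_insert_iff, Set.mem_singleton_iff, Prod.mk.injEq, Prod.ext_iff] at ht
      rcases ht with ⟨-, hx, hd, hq⟩ | ⟨-, hx, hd, hq⟩ | ⟨-, hx, hd, hq⟩ | ⟨h0, _⟩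
      · subst hx; subst hd; subst hq
        have hcnt : (fun i : Fin 1 => (((fun _ => c0 : Fin 1 → ℕ) i : ℤ) + (fun _ => (1:ℤ)) i).toNat)
            = fun _ : Fin 1 => c0 + 1 := funext fun i => by simp
        rw [hcnt] at hrest
        obtain ⟨n, m, hle, heq⟩ := ih (c0 + 1) _ hrest hz
        exact ⟨n + 1, m, by omega, by rw [heq, replicate_succ]; rfl⟩
      · subst hx; subst hd; subst hq
        have hcnt : (fun i : Fin 1 => (((fun _ => c0 : Fin 1 → ℕ) i : ℤ) + (fun _ => (0:ℤ)) i).toNat)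
            = fun _ : Fin 1 => c0 := funext fun i => by simp
        rw [hcnt] at hrest
        obtain ⟨n, m, hle, heq⟩ := ih c0 _ hrest hz
        exact ⟨n + 1, m, by omega, by rw [heq, replicate_succ]; rfl⟩
      · subst hx; subst hd; subst hq
        have hge : 1 ≤ c0 := by have := hnn 0; simp at this; omega
        have hcnt : (fun i : Fin 1 => (((fun _ => c0 : Fin 1 → ℕ) i : ℤ) + (fun _ => (-1:ℤ)) i).toNat)
            = fun _ : Fin 1 => c0 - 1 := funext fun i => by simp; omega
        rw [hcnt] at hrest
        have hw := reachB w (c0 - 1) _ hrest hz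
        refine ⟨0, c0, by omega, ?_⟩
        rw [hw]
        have : c0 = (c0 - 1) + 1 := by omega
        rw [this, replicate_succ]
        rfl
      · exact absurd h0 (by decide)

lemma V1_lang : V1.LangReach = L6 := by
  ext w
  constructor
  · rintro ⟨c, hrun, -, hz⟩
    obtain ⟨n, m, hle, heq⟩ := reachA w 0 c hrun hz
    exact ⟨n, m, by omega, heq⟩
  · rintro ⟨n, m, hle, rfl⟩
    cases m with
    | zero =>
      refine ⟨((0:Fin 2), fun _ => 0), ?_, trivial, rfl⟩
      rw [replicate_zero, append_nil]
      exact runA0 n 0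
    | succ m' =>
      refine ⟨((1:Fin 2), fun _ => 0), ?_, trivial, rfl⟩
      have r1 : V1.Run ((0:Fin 2), fun _ => 0) (replicate n a) ((0:Fin 2), fun _ => m' + 1) := by
        have h1 := runA1 (m' + 1) 0
        simp only [Nat.zero_add] at h1
        have h2 := runA0 (n - (m' + 1)) (m' + 1)
        have := VASS.run_append h1 h2
        rw [← replicate_add] at this
        have e : m' + 1 + (n - (m' + 1)) = n := by omega
        rw [e] at this
        simpa using this
      have r2 : V1.Run ((0:Fin 2), fun _ => m' + 1) (replicate (m' + 1) b) ((1:Fin 2), fun _ => 0) := by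
        rw [replicate_succ]
        refine VASS.Run.cons (d := fun _ => (-1:ℤ)) t3 (fun i => by simp) ?_
        have h : (fun i : Fin 1 => (((fun _ => m' + 1 : Fin 1 → ℕ) i : ℤ) + (fun _ => (-1:ℤ)) i).toNat)
            = fun _ : Fin 1 => m' := funext fun i => by simp
        rw [h]
        exact runB1 m'
      exact VASS.run_append r1 r2

/-- `a^n b^{≤ n}` is recognised by a nondeterministic 1-VASS with reachability
acceptance, but not by any history-deterministic VASS with reachability
acceptance in any dimension, even allowing ε-transitions. -/
theorem stmt6 :
    (∃ V : VASS 1 AB, V.LangReach = L6) ∧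
    (¬ ∃ (k : ℕ) (V : VASS k AB), V.HDReach ∧ V.LangReach = L6) ∧
    (¬ ∃ (k : ℕ) (V : VASS k (Option AB)), V.HDReachE ∧ V.LangReachE = L6) := by
  refine ⟨⟨V1, V1_lang⟩, ?_, ?_⟩
  · rintro ⟨k, V, ⟨r, hr⟩, hL⟩
    have mem : ∀ n : ℕ, replicate n a ∈ V.LangReach := fun n => by
      rw [hL]; exact ⟨n, 0, Nat.zero_le _, by simp⟩
    choose c hc hacc hz using fun n => hr _ (mem n)
    obtain ⟨n, m, hne, hqe⟩ := Finite.exists_ne_map_eq_of_infinite (fun n => (c n).1)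
    have key : ∀ n m : ℕ, n < m → (c n).1 = (c m).1 → False := by
      intro n m hnm hq
      have hcnm : c n = c m := Prod.ext hq ((hz n).trans (hz m).symm)
      have hw : replicate m a ++ replicate m b ∈ V.LangReach := by
        rw [hL]; exact ⟨m, m, le_rfl, rfl⟩
      obtain ⟨c', hres, hacc', hz'⟩ := hr _ hw
      obtain ⟨cm, hcm, hrunb⟩ := VASS.resRun_append_some r hres
      rw [hc m] at hcm
      injection hcm with hcm
      subst hcm
      have hrun : V.Run V.initConf (replicate n a ++ replicate m b) c' :=
        VASS.run_append (VASS.resRun_run r (hc n)) (hcnm ▸ hrunb)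
      have hmem : replicate n a ++ replicate m b ∈ V.LangReach := ⟨c', hrun, hacc', hz'⟩
      rw [hL] at hmem
      exact not_mem_L6 hnm hmem
    rcases lt_or_gt_of_ne hne with h | h
    exacts [key n m h hqe, key m n h hqe.symm]
  · rintro ⟨k, V, ⟨r, f, hmono, hr⟩, hL⟩
    have mem : ∀ n : ℕ, replicate n a ∈ V.LangReachE := fun n => by
      rw [hL]; exact ⟨n, 0, Nat.zero_le _, by simp⟩
    have H := fun n => hr _ (mem n)
    have hred : ∀ n, (f (replicate n a)).reduceOption = replicate n a := fun n => (H n).1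
    choose c hc hacc hz using fun n => (H n).2
    obtain ⟨n, m, hne, hqe⟩ := Finite.exists_ne_map_eq_of_infinite (fun n => (c n).1)
    have key : ∀ n m : ℕ, n < m → (c n).1 = (c m).1 → False := by
      intro n m hnm hq
      have hcnm : c n = c m := Prod.ext hq ((hz n).trans (hz m).symm)
      have hw : replicate m a ++ replicate m b ∈ V.LangReachE := by
        rw [hL]; exact ⟨m, m, le_rfl, rfl⟩
      obtain ⟨hredw, c', hres, hacc', hz'⟩ := hr _ hw
      obtain ⟨u, hu⟩ := hmono (replicate m a) (replicate m a ++ replicate m b) ⟨_, rfl⟩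
      rw [← hu] at hres
      obtain ⟨cm, hcm, hrunb⟩ := VASS.resRun_append_some r hres
      rw [hc m] at hcm
      injection hcm with hcm
      subst hcm
      have hured : u.reduceOption = replicate m b := by
        have h2 := hredw
        rw [← hu, List.reduceOption_append, hred m] at h2
        exact List.append_cancel_left h2
      have hrun : V.Run V.initConf (f (replicate n a) ++ u) c' :=
        VASS.run_append (VASS.resRun_run r (hc n)) (hcnm ▸ hrunb)
      have hmem : replicate n a ++ replicate m b ∈ V.LangReachE :=
        ⟨f (replicate n a) ++ u, c', hrun,
          by rw [List.reduceOption_append, hred n, hured], hacc', hz'⟩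
      rw [hL] at hmem
      exact not_mem_L6 hnm hmem
    rcases lt_or_gt_of_ne hne with h | h
    exacts [key n m h hqe, key m n h hqe.symm]
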